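/- arXiv:1212.1439 — 2 statements merged into one kernel-verified Lean document; each statement's English description precedes it below -/
import Mathlib

section
/- Let σ be an automorphism of finite order f of a finite-dimensional real vector space V preserving a lattice X ⊆ V, and let P_σ = f^{-1}(1 + σ + … + σ^{f−1}) be the projection onto the σ-fixed subspace V̲ = V^σ. Then [(1−σ)V + X] ∩ V̲ = P_σ X. -/
/-- Let `σ` be an automorphism of finite order `f` of a finite-dimensional real vector
space `V` preserving a lattice `X ⊆ V`, and let `P_σ = f⁻¹(1 + σ + ⋯ + σ^{f−1})` be the
projection onto the `σ`-fixed subspace `V̲ = V^σ`.  Then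
`[(1−σ)V + X] ∩ V̲ = P_σ X`:  a vector `v` is `σ`-fixed and of the form `(u − σu) + x`
with `x ∈ X` if and only if `v = P_σ x` for some `x ∈ X`. -/
theorem stmt_12 {V : Type} [AddCommGroup V] [Module ℝ V] [FiniteDimensional ℝ V]
    (f : ℕ) (hf : 0 < f) (σ : Module.End ℝ V) (hσ : σ ^ f = 1)
    (X : AddSubgroup V) (hX : ∀ x ∈ X, σ x ∈ X)
    (P : Module.End ℝ V) (hP : P = (f : ℝ)⁻¹ • ∑ i ∈ Finset.range f, σ ^ i) :
    ∀ v : V, (σ v = v ∧ ∃ u : V, ∃ x ∈ X, v = (u - σ u) + x) ↔ ∃ x ∈ X, v = P x := by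
  set S : Module.End ℝ V := ∑ i ∈ Finset.range f, σ ^ i with hS
  have hfne : (f : ℝ) ≠ 0 := Nat.cast_ne_zero.mpr hf.ne'
  have hσS : σ * S = S := by
    have h : (σ - 1) * S = σ ^ f - 1 := mul_geom_sum σ f
    rw [hσ, sub_self, sub_mul, one_mul, sub_eq_zero] at h
    exact h
  have hSapp : ∀ w : V, S w = ∑ i ∈ Finset.range f, (σ ^ i) w := by
    intro w; rw [hS]; exact LinearMap.sum_apply _ _ _
  have hPapp : ∀ w : V, P w = (f : ℝ)⁻¹ • S w := by
    intro w; rw [hP]; rfl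
  have hSfix : ∀ w : V, σ (S w) = S w := by
    intro w
    have : (σ * S) w = S w := by rw [hσS]
    simpa using this
  have hSfixed : ∀ w : V, σ w = w → S w = (f : ℝ) • w := by
    intro w hw
    have hpow : ∀ i, (σ ^ i) w = w := by
      intro i
      induction i with
      | zero => simp
      | succ n ih => rw [pow_succ, Module.End.mul_apply, hw, ih]
    rw [hSapp]
    simp [hpow, Finset.sum_const, Nat.cast_smul_eq_nsmul]
  intro v
  constructor
  · rintro ⟨hv, u, x, hx, rfl⟩
    refine ⟨x, hx, ?_⟩
    have h1 : P ((u - σ u) + x) = (u - σ u) + x := by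
      rw [hPapp, hSfixed _ hv, smul_smul, inv_mul_cancel₀ hfne, one_smul]
    have hSσ : S * σ = S := by
      have h : S * (σ - 1) = σ ^ f - 1 := geom_sum_mul σ f
      rw [hσ, sub_self, mul_sub, mul_one, sub_eq_zero] at h
      exact h
    have h2 : P (u - σ u) = 0 := by
      rw [hPapp]
      have hSu : S (σ u) = S u := by
        have : (S * σ) u = S u := by rw [hSσ]
        simpa using this
      rw [map_sub, hSu, sub_self, smul_zero]
    rw [map_add, h2, zero_add] at h1
    exact h1.symm
  · rintro ⟨x, hx, rfl⟩
    have hfixPx : σ (P x) = P x := by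
      rw [hPapp, map_smul, hSfix]
    refine ⟨hfixPx, -((f : ℝ)⁻¹ • (∑ i ∈ Finset.range f, (∑ j ∈ Finset.range i, σ ^ j) x)),
      x, hx, ?_⟩
    set T : Module.End ℝ V := ∑ i ∈ Finset.range f, ∑ j ∈ Finset.range i, σ ^ j with hTdef
    have hTapp : (∑ i ∈ Finset.range f, (∑ j ∈ Finset.range i, σ ^ j) x) = T x := by
      rw [hTdef]; exact (LinearMap.sum_apply _ _ _).symm
    have hσT : (σ - 1) * T = S - f • 1 := by
      rw [hTdef, Finset.mul_sum]
      have : ∀ i ∈ Finset.range f, (σ - 1) * ∑ j ∈ Finset.range i, σ ^ j = σ ^ i - 1 :=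
        fun i _ => mul_geom_sum σ i
      rw [Finset.sum_congr rfl this, Finset.sum_sub_distrib, hS, Finset.sum_const,
        Finset.card_range]
    have key : σ (T x) - T x = S x - (f : ℝ) • x := by
      have h1 : ((σ - 1) * T) x = σ (T x) - T x := by
        simp [Module.End.mul_apply, LinearMap.sub_apply]
      have h2 : ((S : Module.End ℝ V) - f • 1) x = S x - (f : ℝ) • x := by
        simp [LinearMap.sub_apply, Nat.cast_smul_eq_nsmul]
      rw [← h1, hσT, h2]
    rw [hTapp, hPapp]
    have h3 : -((f : ℝ)⁻¹ • T x) - σ (-((f : ℝ)⁻¹ • T x)) + x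
        = (f : ℝ)⁻¹ • (σ (T x) - T x) + x := by
      rw [map_neg, map_smul]; module
    rw [h3, key, smul_sub, smul_smul, inv_mul_cancel₀ hfne, one_smul]
    abel
end

section
/- With σ a finite-order automorphism of a lattice X, the group Y = X_σ/torsion of σ-coinvariants modulo torsion and the group Y̌ = X̌^σ of σ-invariants of the dual lattice X̌ = Hom(X, Z) are free abelian groups in perfect duality under the pairing (x̲, v) ↦ ⟨x, v⟩, where x is any preimage of x̲ in X. -/
set_option maxHeartbeats 2000000

/-- Let `σ` be a finite-order automorphism of a free abelian group `X` of finite rank.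
Then `Y = X_σ/torsion` (coinvariants `X/(1−σ)X` modulo torsion) and
`Y̌ = X̌^σ` (invariants of the dual `X̌ = Hom(X, ℤ)` under precomposition with `σ`) are
free abelian groups in perfect duality under the pairing `(x̲, v) ↦ ⟨x, v⟩ = v(x)`,
where `x` is any preimage of `x̲` in `X`. -/
theorem stmt_13 {X : Type} [AddCommGroup X] [Module.Free ℤ X] [Module.Finite ℤ X]
    (σ : Module.End ℤ X) (f : ℕ) (hf : 0 < f) (hσ : σ ^ f = 1) :
    ∃ B : ((X ⧸ LinearMap.range ((1 : Module.End ℤ X) - σ)) ⧸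
            Submodule.torsion ℤ (X ⧸ LinearMap.range ((1 : Module.End ℤ X) - σ))) →ₗ[ℤ]
          (↥(LinearMap.eqLocus ((σ : X →ₗ[ℤ] X).dualMap) (LinearMap.id)) →ₗ[ℤ] ℤ),
      (∀ (x : X) (v : Module.Dual ℤ X) (hv : (σ : X →ₗ[ℤ] X).dualMap v = LinearMap.id v),
        B (Submodule.Quotient.mk (Submodule.Quotient.mk x)) ⟨v, hv⟩ = v x) ∧
      Function.Bijective B ∧ Function.Bijective B.flip ∧
      Module.Free ℤ ((X ⧸ LinearMap.range ((1 : Module.End ℤ X) - σ)) ⧸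
        Submodule.torsion ℤ (X ⧸ LinearMap.range ((1 : Module.End ℤ X) - σ))) ∧
      Module.Free ℤ ↥(LinearMap.eqLocus ((σ : X →ₗ[ℤ] X).dualMap) (LinearMap.id)) := by
  set K : Submodule ℤ X := LinearMap.range ((1 : Module.End ℤ X) - σ) with hK
  set A : Submodule ℤ (Module.Dual ℤ X) :=
    LinearMap.eqLocus ((σ : X →ₗ[ℤ] X).dualMap) LinearMap.id with hA
  -- membership in A
  have hmemA : ∀ v : Module.Dual ℤ X, v ∈ A ↔ ∀ x : X, v (σ x) = v x := by
    intro v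
    constructor
    · intro hv x
      exact DFunLike.congr_fun hv x
    · intro h
      ext x
      exact h x
  -- the evaluation map
  let e : X →ₗ[ℤ] (A →ₗ[ℤ] ℤ) := (A.subtype.dualMap).comp (Module.Dual.eval ℤ X)
  have he : ∀ (x : X) (v : A), e x v = (v : Module.Dual ℤ X) x := fun _ _ => rfl
  have h1 : K ≤ LinearMap.ker e := by
    rintro _ ⟨y, rfl⟩
    rw [LinearMap.mem_ker]
    ext v
    have hv := (hmemA v).mp v.2 y
    simp only [he, LinearMap.sub_apply, Module.End.one_apply, map_sub]
    simp [hv]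
  let e1 : (X ⧸ K) →ₗ[ℤ] (A →ₗ[ℤ] ℤ) := K.liftQ e h1
  have h2 : Submodule.torsion ℤ (X ⧸ K) ≤ LinearMap.ker e1 := by
    rintro q ⟨⟨n, hn⟩, hq⟩
    rw [LinearMap.mem_ker]
    have : n • e1 q = 0 := by
      rw [← map_smul]
      have hq' : n • q = 0 := hq
      rw [hq', map_zero]
    ext a
    have := DFunLike.congr_fun this a
    simp only [LinearMap.smul_apply, LinearMap.zero_apply, smul_eq_zero] at this
    rcases this with h | h
    · exact absurd h (nonZeroDivisors.ne_zero hn)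
    · simpa using h
  set B := (Submodule.torsion ℤ (X ⧸ K)).liftQ e1 h2 with hB
  -- injectivity of the dual evaluation
  have eval_inj : Function.Injective (Module.Dual.eval ℤ X) :=
    (Module.bijective_dual_eval ℤ X).1
  -- key torsion characterization
  have hker : ∀ x : X, (∀ v : A, (v : Module.Dual ℤ X) x = 0) →
      (Submodule.Quotient.mk x : X ⧸ K) ∈ Submodule.torsion ℤ (X ⧸ K) := by
    intro x hx
    set N : Module.End ℤ X := ∑ i ∈ Finset.range f, σ ^ i with hN
    have hNσ : N * σ = N := by
      have h := geom_sum_mul σ f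
      rw [hσ, sub_self] at h
      have h2 : N * (σ - 1) = 0 := h
      rw [mul_sub, mul_one, sub_eq_zero] at h2
      exact h2
    have hNmem : ∀ w : Module.Dual ℤ X, w ∘ₗ (N : X →ₗ[ℤ] X) ∈ A := by
      intro w
      rw [hmemA]
      intro y
      show w (N (σ y)) = w (N y)
      have : N (σ y) = N y := by
        conv_rhs => rw [← hNσ]
        rfl
      rw [this]
    have hNx : N x = 0 := by
      apply eval_inj
      rw [map_zero]
      ext w
      exact hx ⟨w ∘ₗ (N : X →ₗ[ℤ] X), hNmem w⟩
    have hterm : ∀ i, ((1 : Module.End ℤ X) - σ ^ i) x ∈ K := by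
      intro i
      have h := mul_geom_sum σ i
      have heq : (1 : Module.End ℤ X) - σ ^ i
          = (1 - σ) * (∑ j ∈ Finset.range i, σ ^ j) := by
        rw [← neg_sub (σ ^ i) (1 : Module.End ℤ X), ← h, ← neg_mul, neg_sub]
      rw [heq]
      exact ⟨(∑ j ∈ Finset.range i, σ ^ j) x, rfl⟩
    have hsum : (f : ℤ) • x
        = ∑ i ∈ Finset.range f, (((1 : Module.End ℤ X) - σ ^ i) x) := by
      have : ∑ i ∈ Finset.range f, (((1 : Module.End ℤ X) - σ ^ i) x)
          = (∑ i ∈ Finset.range f, (x - (σ ^ i) x)) := by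
        apply Finset.sum_congr rfl
        intro i _
        simp [LinearMap.sub_apply]
      rw [this, Finset.sum_sub_distrib, Finset.sum_const, Finset.card_range]
      have hNx' : ∑ i ∈ Finset.range f, (σ ^ i) x = N x := by
        rw [hN]
        simp [LinearMap.sum_apply]
      rw [hNx', hNx, sub_zero]
      simp
    have hfx : (f : ℤ) • x ∈ K := by
      rw [hsum]
      exact Submodule.sum_mem K fun i _ => hterm i
    refine ⟨⟨(f : ℤ), mem_nonZeroDivisors_of_ne_zero ?_⟩, ?_⟩
    · exact_mod_cast hf.ne'
    · show (f : ℤ) • (Submodule.Quotient.mk x : X ⧸ K) = 0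
      rw [← Submodule.Quotient.mk_smul, Submodule.Quotient.mk_eq_zero]
      exact hfx
  -- injectivity of B
  have hBinj : Function.Injective B := by
    rw [injective_iff_map_eq_zero]
    intro q hq
    obtain ⟨q', rfl⟩ := Submodule.Quotient.mk_surjective _ q
    obtain ⟨x, rfl⟩ := Submodule.Quotient.mk_surjective _ q'
    rw [Submodule.Quotient.mk_eq_zero]
    apply hker
    intro v
    exact DFunLike.congr_fun hq v
  -- retraction machinery for surjectivity
  have dual_smul_cancel : ∀ (n : ℤ), n ≠ 0 → ∀ v : Module.Dual ℤ X, n • v = 0 → v = 0 := by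
    intro n hn v h
    ext x
    have := DFunLike.congr_fun h x
    simp only [LinearMap.smul_apply, smul_eq_mul, LinearMap.zero_apply] at this
    rcases mul_eq_zero.mp this with h' | h'
    · exact absurd h' hn
    · simpa using h'
  haveI : NoZeroSMulDivisors ℤ (Module.Dual ℤ X ⧸ A) := by
    refine ⟨fun {c} {x} h => ?_⟩
    by_cases hc : c = 0
    · exact Or.inl hc
    right
    obtain ⟨v, rfl⟩ := Submodule.Quotient.mk_surjective A x
    rw [← Submodule.Quotient.mk_smul, Submodule.Quotient.mk_eq_zero] at h
    rw [Submodule.Quotient.mk_eq_zero]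
    rw [hmemA] at h ⊢
    intro y
    have := h y
    simp only [LinearMap.smul_apply, smul_eq_mul] at this
    exact mul_left_cancel₀ hc this
  haveI : Module.Free ℤ (Module.Dual ℤ X ⧸ A) := inferInstance
  obtain ⟨s, hs⟩ := Module.projective_lifting_property A.mkQ
    (LinearMap.id : (Module.Dual ℤ X ⧸ A) →ₗ[ℤ] (Module.Dual ℤ X ⧸ A))
    (Submodule.mkQ_surjective A)
  have hrmem : ∀ v : Module.Dual ℤ X,
      ((LinearMap.id : Module.Dual ℤ X →ₗ[ℤ] Module.Dual ℤ X) - s ∘ₗ A.mkQ) v ∈ A := by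
    intro v
    have h := DFunLike.congr_fun hs (A.mkQ v)
    simp only [LinearMap.comp_apply, LinearMap.id_apply] at h
    rw [← Submodule.Quotient.mk_eq_zero A]
    show A.mkQ (v - s (A.mkQ v)) = 0
    rw [map_sub, h, sub_self]
  set r : Module.Dual ℤ X →ₗ[ℤ] A :=
    LinearMap.codRestrict A
      ((LinearMap.id : Module.Dual ℤ X →ₗ[ℤ] Module.Dual ℤ X) - s ∘ₗ A.mkQ) hrmem with hr
  have hrfix : ∀ v : A, r (v : Module.Dual ℤ X) = v := by
    intro v
    apply Subtype.ext
    show (v : Module.Dual ℤ X) - s (A.mkQ v) = v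
    have : A.mkQ (v : Module.Dual ℤ X) = 0 := by
      rw [Submodule.mkQ_apply, Submodule.Quotient.mk_eq_zero]
      exact v.2
    rw [this, map_zero, sub_zero]
  -- surjectivity of B
  have hBsurj : Function.Surjective B := by
    intro φ
    set ψ : Module.Dual ℤ (Module.Dual ℤ X) := φ ∘ₗ r with hψ
    set x := (Module.evalEquiv ℤ X).symm ψ with hx
    refine ⟨Submodule.Quotient.mk (Submodule.Quotient.mk x), ?_⟩
    ext v
    show e x v = φ v
    rw [he]
    have h1 : (v : Module.Dual ℤ X) x = ψ (v : Module.Dual ℤ X) :=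
      Module.apply_evalEquiv_symm_apply ℤ X (v : Module.Dual ℤ X) ψ
    rw [h1]
    show φ (r (v : Module.Dual ℤ X)) = φ v
    rw [hrfix]
  -- flip bijective
  have hflipinj : Function.Injective B.flip := by
    rw [injective_iff_map_eq_zero]
    intro v hv0
    apply Subtype.ext
    ext x
    have := DFunLike.congr_fun hv0
      (Submodule.Quotient.mk (Submodule.Quotient.mk x) :
        (X ⧸ K) ⧸ Submodule.torsion ℤ (X ⧸ K))
    exact this
  have hflipsurj : Function.Surjective B.flip := by
    intro φ
    set w : Module.Dual ℤ X :=
      φ ∘ₗ (Submodule.torsion ℤ (X ⧸ K)).mkQ ∘ₗ K.mkQ with hw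
    have hwA : w ∈ A := by
      rw [hmemA]
      intro x
      show φ (Submodule.Quotient.mk (Submodule.Quotient.mk (σ x)))
        = φ (Submodule.Quotient.mk (Submodule.Quotient.mk x))
      congr 1
      congr 1
      rw [Submodule.Quotient.eq]
      have hd : σ x - x = -(((1 : Module.End ℤ X) - σ) x) := by
        simp [LinearMap.sub_apply]
      rw [hd]
      exact Submodule.neg_mem K ⟨x, rfl⟩
    refine ⟨⟨w, hwA⟩, ?_⟩
    ext q
    rfl
  -- freeness
  haveI hYfree : Module.Free ℤ ((X ⧸ K) ⧸ Submodule.torsion ℤ (X ⧸ K)) := inferInstance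
  haveI : Module.Finite ℤ A := by
    have : A.FG := IsNoetherian.noetherian A
    exact Module.Finite.iff_fg.mpr this
  haveI : NoZeroSMulDivisors ℤ A := by
    refine ⟨fun {c} {v} h => ?_⟩
    by_cases hc : c = 0
    · exact Or.inl hc
    right
    apply Subtype.ext
    have : c • (v : Module.Dual ℤ X) = 0 := by
      exact_mod_cast congrArg Subtype.val h
    exact dual_smul_cancel c hc _ this
  haveI hAfree : Module.Free ℤ A := inferInstance
  exact ⟨B, fun x v hv => rfl, ⟨hBinj, hBsurj⟩, ⟨hflipinj, hflipsurj⟩, hYfree, hAfree⟩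
end
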